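/- Suppose p(x,y) > 0 for all x ∈ X, y ∈ Y, sup_{x,y} p(x,y) < ∞, and ∫_Y (∫_X p(x,y) dμ(x))⁻¹ dν(y) < ∞. Let (u_n) be the Fortet scheme with U ≡ 1 and let u_* be its pointwise limit. If there exists x₀ ∈ X such that Φ[u_*](x₀) = 0, then the sequence (Φ[u_n]) converges uniformly to 0, i.e. lim_{n→∞} sup_{x∈X} Φ[u_n](x) = 0. -/

import Mathlib

/-!
If `Φ[u_*](x₀) = 0`, positivity of `p` forces `Ψ[u_*] = ∞` ν-a.e., and Fatou's lemma upgrades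
this to `Ψ[u_n] → ∞` ν-a.e. Since `u_n ≤ 1`, the functions `Ψ[u_n]⁻¹` are dominated by the
integrable `(∫ p(x, ·) dμ)⁻¹`, so `∫ Ψ[u_n]⁻¹ dν → 0` by dominated convergence, and
`Φ[u_n](x) ≤ (sup p) · ∫ Ψ[u_n]⁻¹ dν` uniformly in `x`.
-/

open MeasureTheory ENNReal Filter Topology

noncomputable section

/-- `Ψ[u](y) = ∫_X p(x',y) u(x')⁻¹ dμ(x')`. -/
def fortetPsi {X Y : Type*} [MeasurableSpace X]
    (p : X → Y → ℝ≥0∞) (μ : Measure X) (u : X → ℝ≥0∞) (y : Y) : ℝ≥0∞ :=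
  ∫⁻ x, p x y * (u x)⁻¹ ∂μ

/-- The Fortet mapping `Φ[u](x) = ∫_Y p(x,y) Ψ[u](y)⁻¹ dν(y)`. -/
def fortetPhi {X Y : Type*} [MeasurableSpace X] [MeasurableSpace Y]
    (p : X → Y → ℝ≥0∞) (μ : Measure X) (ν : Measure Y) (u : X → ℝ≥0∞) (x : X) : ℝ≥0∞ :=
  ∫⁻ y, p x y * (fortetPsi p μ u y)⁻¹ ∂ν

/-- The Fortet scheme: `fortetSeq p μ ν U n` is `u_{n+1}`, i.e. `u₁ = U` and
`u_{n+1} = max (U/(n+1)) (min (Φ[u_n]) U)`. -/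
def fortetSeq {X Y : Type*} [MeasurableSpace X] [MeasurableSpace Y]
    (p : X → Y → ℝ≥0∞) (μ : Measure X) (ν : Measure Y) (U : X → ℝ≥0∞) :
    ℕ → X → ℝ≥0∞
  | 0 => U
  | n + 1 => fun x =>
      max (U x / (n + 2)) (min (fortetPhi p μ ν (fortetSeq p μ ν U n) x) (U x))

namespace Fortet

variable {X Y : Type*} [MeasurableSpace X] {p : X → Y → ℝ≥0∞} {μ : Measure X}

theorem inv_fortetPsi_le {u : X → ℝ≥0∞} (hu : ∀ x, u x ≤ 1) (y : Y) :
    (fortetPsi p μ u y)⁻¹ ≤ (∫⁻ x, p x y ∂μ)⁻¹ := by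
  refine ENNReal.inv_le_inv' (lintegral_mono fun x => ?_)
  calc p x y = p x y * 1 := (mul_one _).symm
    _ ≤ p x y * (u x)⁻¹ := mul_le_mul_right (ENNReal.one_le_inv.mpr (hu x)) _

variable [MeasurableSpace Y] {ν : Measure Y}

theorem measurable_fortetPsi [SFinite μ] (hp : Measurable (Function.uncurry p))
    {u : X → ℝ≥0∞} (hu : Measurable u) : Measurable (fortetPsi p μ u) :=
  (hp.mul (hu.comp measurable_fst).inv).lintegral_prod_left'

theorem measurable_fortetPhi [SFinite μ] [SFinite ν] (hp : Measurable (Function.uncurry p))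
    {u : X → ℝ≥0∞} (hu : Measurable u) : Measurable (fortetPhi p μ ν u) :=
  (hp.mul ((measurable_fortetPsi hp hu).comp measurable_snd).inv).lintegral_prod_right'

theorem measurable_fortetSeq [SFinite μ] [SFinite ν] (hp : Measurable (Function.uncurry p))
    {U : X → ℝ≥0∞} (hU : Measurable U) (n : ℕ) : Measurable (fortetSeq p μ ν U n) := by
  induction n with
  | zero => exact hU
  | succ n ih => exact (hU.div_const _).max ((measurable_fortetPhi hp ih).min hU)

theorem fortetSeq_le (U : X → ℝ≥0∞) (n : ℕ) (x : X) : fortetSeq p μ ν U n x ≤ U x := by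
  cases n with
  | zero => rfl
  | succ n =>
    refine max_le (ENNReal.div_le_of_le_mul (le_mul_of_one_le_right' ?_)) (min_le_right _ _)
    exact one_le_two.trans le_add_self

theorem ae_fortetPsi_eq_top_of_fortetPhi_eq_zero [SFinite μ]
    (hp : Measurable (Function.uncurry p)) {x₀ : X} (hpos : ∀ y, 0 < p x₀ y)
    {u : X → ℝ≥0∞} (hu : Measurable u) (h : fortetPhi p μ ν u x₀ = 0) :
    ∀ᵐ y ∂ν, fortetPsi p μ u y = ∞ := by
  have hmeas : Measurable fun y => p x₀ y * (fortetPsi p μ u y)⁻¹ :=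
    hp.of_uncurry_left.mul (measurable_fortetPsi hp hu).inv
  filter_upwards [(lintegral_eq_zero_iff hmeas).mp h] with y hy
  rcases mul_eq_zero.mp hy with hp0 | hinv
  · exact absurd hp0 (hpos y).ne'
  · exact ENNReal.inv_eq_zero.mp hinv

theorem tendsto_fortetPsi_top {u : ℕ → X → ℝ≥0∞} {v : X → ℝ≥0∞} {y : Y}
    (hp : Measurable (Function.uncurry p)) (hp_ne_top : ∀ x, p x y ≠ ∞)
    (hu : ∀ n, Measurable (u n)) (hlim : ∀ x, Tendsto (fun n => u n x) atTop (𝓝 (v x)))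
    (hy : fortetPsi p μ v y = ∞) :
    Tendsto (fun n => fortetPsi p μ (u n) y) atTop (𝓝 ∞) := by
  have hpt : ∀ x, Tendsto (fun n => p x y * (u n x)⁻¹) atTop (𝓝 (p x y * (v x)⁻¹)) := fun x =>
    ENNReal.Tendsto.const_mul (tendsto_inv_iff.2 (hlim x)) (Or.inr (hp_ne_top x))
  have hliminf : liminf (fun n => fortetPsi p μ (u n) y) atTop = ∞ := by
    refine top_le_iff.mp ?_
    calc ∞ = ∫⁻ x, p x y * (v x)⁻¹ ∂μ := hy.symm
      _ = ∫⁻ x, liminf (fun n => p x y * (u n x)⁻¹) atTop ∂μ :=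
          lintegral_congr fun x => ((hpt x).liminf_eq).symm
      _ ≤ liminf (fun n => fortetPsi p μ (u n) y) atTop :=
          lintegral_liminf_le fun n => hp.of_uncurry_right.mul (hu n).inv
  exact tendsto_of_liminf_eq_limsup hliminf (top_unique (hliminf ▸ liminf_le_limsup))

theorem tendsto_lintegral_inv_fortetPsi_zero [SFinite μ] (hp : Measurable (Function.uncurry p))
    (hint : ∫⁻ y, (∫⁻ x, p x y ∂μ)⁻¹ ∂ν ≠ ∞) {u : ℕ → X → ℝ≥0∞} (hu : ∀ n, Measurable (u n))
    (hu_le : ∀ n x, u n x ≤ 1)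
    (htop : ∀ᵐ y ∂ν, Tendsto (fun n => fortetPsi p μ (u n) y) atTop (𝓝 ∞)) :
    Tendsto (fun n => ∫⁻ y, (fortetPsi p μ (u n) y)⁻¹ ∂ν) atTop (𝓝 0) := by
  have h := tendsto_lintegral_of_dominated_convergence (μ := ν) (f := fun _ => 0) _
    (fun n => (measurable_fortetPsi hp (hu n)).inv)
    (fun n => .of_forall (inv_fortetPsi_le (hu_le n))) hint
    (htop.mono fun y hy => by simpa using tendsto_inv_iff.2 hy)
  simpa using h

theorem fortetPhi_le {M : ℝ≥0∞} (hM : ∀ x y, p x y ≤ M) (hM_ne_top : M ≠ ∞)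
    (u : X → ℝ≥0∞) (x : X) :
    fortetPhi p μ ν u x ≤ M * ∫⁻ y, (fortetPsi p μ u y)⁻¹ ∂ν :=
  calc fortetPhi p μ ν u x ≤ ∫⁻ y, M * (fortetPsi p μ u y)⁻¹ ∂ν :=
        lintegral_mono fun y => mul_le_mul_left (hM x y) _
    _ = M * ∫⁻ y, (fortetPsi p μ u y)⁻¹ ∂ν := lintegral_const_mul' M _ hM_ne_top

theorem tendsto_iSup_fortetPhi_zero {M : ℝ≥0∞} (hM : ∀ x y, p x y ≤ M) (hM_ne_top : M ≠ ∞)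
    {u : ℕ → X → ℝ≥0∞}
    (h : Tendsto (fun n => ∫⁻ y, (fortetPsi p μ (u n) y)⁻¹ ∂ν) atTop (𝓝 0)) :
    Tendsto (fun n => ⨆ x, fortetPhi p μ ν (u n) x) atTop (𝓝 0) := by
  have hM0 : Tendsto (fun n => M * ∫⁻ y, (fortetPsi p μ (u n) y)⁻¹ ∂ν) atTop (𝓝 0) := by
    simpa using ENNReal.Tendsto.const_mul h (Or.inr hM_ne_top)
  exact tendsto_of_tendsto_of_tendsto_of_le_of_le tendsto_const_nhds hM0 (fun _ => zero_le)
    fun n => iSup_le (fortetPhi_le hM hM_ne_top (u n))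

end Fortet

open Fortet

theorem fortet_uniform_convergence_to_zero
    {X Y : Type*} [MeasurableSpace X] [MeasurableSpace Y]
    (μ : Measure X) (ν : Measure Y)
    [IsProbabilityMeasure μ] [IsProbabilityMeasure ν]
    (p : X → Y → ℝ≥0∞)
    (hp_meas : Measurable (Function.uncurry p))
    (hp_pos : ∀ x y, 0 < p x y)
    (hp_bdd : (⨆ x, ⨆ y, p x y) < ∞)
    (hint : (∫⁻ y, (∫⁻ x, p x y ∂μ)⁻¹ ∂ν) < ∞)
    (ustar : X → ℝ≥0∞)
    (hustar : ∀ x, Tendsto (fun n => fortetSeq p μ ν (fun _ => 1) n x) atTop (𝓝 (ustar x)))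
    (x₀ : X) (hx₀ : fortetPhi p μ ν ustar x₀ = 0) :
    Tendsto (fun n => ⨆ x, fortetPhi p μ ν (fortetSeq p μ ν (fun _ => 1) n) x)
      atTop (𝓝 0) := by
  set u := fortetSeq p μ ν (fun _ => 1)
  have hpM : ∀ x y, p x y ≤ ⨆ x, ⨆ y, p x y := fun x y => le_iSup₂ (f := fun x y => p x y) x y
  have hu : ∀ n, Measurable (u n) := measurable_fortetSeq hp_meas measurable_const
  have hustar_meas : Measurable ustar :=
    measurable_of_tendsto_metrizable hu (tendsto_pi_nhds.2 hustar)
  have htop : ∀ᵐ y ∂ν, Tendsto (fun n => fortetPsi p μ (u n) y) atTop (𝓝 ∞) := by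
    filter_upwards [ae_fortetPsi_eq_top_of_fortetPhi_eq_zero hp_meas (hp_pos x₀) hustar_meas hx₀]
      with y hy
    exact tendsto_fortetPsi_top hp_meas (fun x => ((hpM x y).trans_lt hp_bdd).ne) hu hustar hy
  exact tendsto_iSup_fortetPhi_zero hpM hp_bdd.ne <|
    tendsto_lintegral_inv_fortetPsi_zero hp_meas hint.ne hu (fortetSeq_le _) htop

end
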